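/- For any unit vector φ = (α,β) ∈ ℂ², the second moment of the limit density is ∫_{−|a|}^{|a|} x² · f(x; φ) dx = 1 − √(1−|a|²); in particular it is independent of φ. -/

import Mathlib

open Matrix

/-!
With `r = ‖a‖` and `s = √(1 - r²)`, the odd part of the integrand integrates to zero and
`x² / (1 - x²) = 1 / (1 - x²) - 1`, so the moment is
`(s / π) (∫ dx / ((1 - x²) √(r² - x²)) - ∫ dx / √(r² - x²)) = (s / π) (π / s - π)`.
Both integrals come from the explicit primitive `s⁻¹ arcsin (s x / (r √(1 - x²))) - arcsin (x / r)`,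
which is continuous up to `±r`; the odd part has the even primitive
`√(r² - x²) - s⁻¹ arctan (√(r² - x²) / s)`, which contributes nothing.
-/

open Real Set intervalIntegral MeasureTheory

section

variable {r s x : ℝ}

lemma hasDerivAt_sqrt_sq_sub_sq (hx : x ^ 2 < r ^ 2) :
    HasDerivAt (fun y => √(r ^ 2 - y ^ 2)) (-x / √(r ^ 2 - x ^ 2)) x := by
  refine (((hasDerivAt_pow 2 x).const_sub (r ^ 2)).sqrt (by linarith)).congr_deriv ?_
  field_simp
  ring

lemma hasDerivAt_arcsin_div (hr : 0 < r) (hx : x ^ 2 < r ^ 2) :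
    HasDerivAt (fun y => arcsin (y / r)) (√(r ^ 2 - x ^ 2))⁻¹ x := by
  have hxr : |x / r| < 1 := by
    rw [abs_div, abs_of_pos hr, div_lt_one hr]; exact abs_lt_of_sq_lt_sq hx hr.le
  refine ((hasDerivAt_arcsin (abs_lt.1 hxr).1.ne' (abs_lt.1 hxr).2.ne).comp x
    ((hasDerivAt_id x).div_const r)).congr_deriv ?_
  rw [show 1 - (x / r) ^ 2 = (r ^ 2 - x ^ 2) / r ^ 2 by field_simp, sqrt_div' _ (sq_nonneg r),
    sqrt_sq hr.le]
  field_simp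

lemma hasDerivAt_arctan_sqrt_sq_sub_sq_div (hs : s ≠ 0) (hrs : r ^ 2 + s ^ 2 = 1)
    (hx : x ^ 2 < r ^ 2) :
    HasDerivAt (fun y => arctan (√(r ^ 2 - y ^ 2) / s))
      (-(s * x) / ((1 - x ^ 2) * √(r ^ 2 - x ^ 2))) x := by
  have hpos : 0 < √(r ^ 2 - x ^ 2) := sqrt_pos.2 (by linarith)
  have hsq : √(r ^ 2 - x ^ 2) ^ 2 = r ^ 2 - x ^ 2 := sq_sqrt (by linarith)
  have h1 : 0 < 1 - x ^ 2 := by nlinarith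
  refine ((hasDerivAt_sqrt_sq_sub_sq hx).div_const s).arctan.congr_deriv ?_
  field_simp
  linear_combination x * hrs + x * hsq

lemma hasDerivAt_arcsin_mul_div_sqrt (hr : 0 < r) (hrs : r ^ 2 + s ^ 2 = 1)
    (hx : x ^ 2 < r ^ 2) :
    HasDerivAt (fun y => arcsin (s * y / (r * √(1 - y ^ 2))))
      (s / ((1 - x ^ 2) * √(r ^ 2 - x ^ 2))) x := by
  have hx1 : x ^ 2 < 1 ^ 2 := by nlinarith
  have hp : 0 < √(1 - x ^ 2) := sqrt_pos.2 (by linarith)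
  have hpsq : √(1 - x ^ 2) ^ 2 = 1 - x ^ 2 := sq_sqrt (by linarith)
  have h1 : 1 - x ^ 2 ≠ 0 := by nlinarith
  set u := s * x / (r * √(1 - x ^ 2))
  have hu : 1 - u ^ 2 = (r ^ 2 - x ^ 2) / (r * √(1 - x ^ 2)) ^ 2 := by
    simp only [u]; field_simp; rw [hpsq]; linear_combination (-x ^ 2) * hrs
  have hsqrtu : √(1 - u ^ 2) = √(r ^ 2 - x ^ 2) / (r * √(1 - x ^ 2)) := by
    rw [hu, sqrt_div' _ (sq_nonneg _), sqrt_sq (by positivity)]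
  have hu1 : 0 < 1 - u ^ 2 := by rw [hu]; positivity
  have hden := (hasDerivAt_sqrt_sq_sub_sq hx1).const_mul r
  simp only [one_pow] at hden
  have hu_lt : |u| < 1 := by
    rw [← sq_lt_one_iff_abs_lt_one]; linarith
  refine ((hasDerivAt_arcsin (abs_lt.1 hu_lt).1.ne' (abs_lt.1 hu_lt).2.ne).comp x
    (((hasDerivAt_id x).const_mul s).div hden (by positivity))).congr_deriv ?_
  rw [hsqrtu]
  field_simp
  simp only [id, hpsq]
  field_simp
  ring

lemma intervalIntegrable_inv_sqrt_sq_sub_sq (hr : 0 < r) :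
    IntervalIntegrable (fun x => (√(r ^ 2 - x ^ 2))⁻¹) volume (-r) r := by
  have hrr : -r ≤ r := by linarith
  refine intervalIntegrable_deriv_of_nonneg (g := fun y => arcsin (y / r))
    (by fun_prop) (fun x hx => hasDerivAt_arcsin_div hr ?_) (fun x _ => by positivity)
  rw [min_eq_left hrr, max_eq_right hrr] at hx
  exact sq_lt_sq' hx.1 hx.2

end

/-- `f(x; φ)` with `r = |a|`, `s = √(1 - |a|²)` and `K` the coefficient of `x` in the braces. -/
noncomputable def limitDensity (r s K x : ℝ) : ℝ :=
  s / (π * (1 - x ^ 2) * √(r ^ 2 - x ^ 2)) * (1 - K * x)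

noncomputable def secondMomentPrimitive (r s K x : ℝ) : ℝ :=
  s / π * (s⁻¹ * arcsin (s * x / (r * √(1 - x ^ 2))) - arcsin (x / r)
    - K * (√(r ^ 2 - x ^ 2) - s⁻¹ * arctan (√(r ^ 2 - x ^ 2) / s)))

section

variable {r s : ℝ} (K : ℝ)

lemma hasDerivAt_secondMomentPrimitive (hr : 0 < r) (hs : s ≠ 0) (hrs : r ^ 2 + s ^ 2 = 1)
    {x : ℝ} (hx : x ^ 2 < r ^ 2) :
    HasDerivAt (secondMomentPrimitive r s K) (x ^ 2 * limitDensity r s K x) x := by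
  have h1 : 1 - x ^ 2 ≠ 0 := by nlinarith
  refine ((((hasDerivAt_arcsin_mul_div_sqrt hr hrs hx).const_mul s⁻¹).sub
    (hasDerivAt_arcsin_div hr hx)).sub (((hasDerivAt_sqrt_sq_sub_sq hx).sub
    ((hasDerivAt_arctan_sqrt_sq_sub_sq_div hs hrs hx).const_mul s⁻¹)).const_mul K)).const_mul
    (s / π) |>.congr_deriv ?_
  simp only [limitDensity]
  field_simp
  ring

lemma continuousOn_secondMomentPrimitive (hr : 0 < r) (hr1 : r < 1) :
    ContinuousOn (secondMomentPrimitive r s K) (Icc (-r) r) := by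
  have hden : ∀ x ∈ Icc (-r) r, r * √(1 - x ^ 2) ≠ 0 := fun x hx => by
    have : x ^ 2 < 1 := by nlinarith [hx.1, hx.2]
    have : 0 < √(1 - x ^ 2) := sqrt_pos.2 (by linarith)
    positivity
  unfold secondMomentPrimitive
  exact continuousOn_const.mul ((continuousOn_const.mul (continuous_arcsin.comp_continuousOn
    ((continuousOn_const.mul continuousOn_id).div (by fun_prop) hden))).sub
    (by fun_prop) |>.sub (by fun_prop))

lemma secondMomentPrimitive_sub (hr : 0 < r) (hs : 0 < s) (hrs : r ^ 2 + s ^ 2 = 1) :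
    secondMomentPrimitive r s K r - secondMomentPrimitive r s K (-r) = 1 - s := by
  have hsr : √(1 - r ^ 2) = s := by rw [← hrs, add_sub_cancel_left, sqrt_sq hs.le]
  simp only [secondMomentPrimitive, neg_sq, sub_self, sqrt_zero, zero_div, arctan_zero, hsr,
    neg_div, mul_neg, div_self hr.ne', arcsin_neg, arcsin_one]
  rw [show s * r / (r * s) = 1 by field_simp, arcsin_one]
  field_simp
  ring

lemma intervalIntegrable_sq_mul_limitDensity (hr : 0 < r) (hr1 : r < 1) :
    IntervalIntegrable (fun x => x ^ 2 * limitDensity r s K x) volume (-r) r := by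
  have hcont : ContinuousOn (fun x => x ^ 2 * (s / (π * (1 - x ^ 2)) * (1 - K * x)))
      (uIcc (-r) r) := by
    have hne : ∀ x ∈ uIcc (-r) r, π * (1 - x ^ 2) ≠ 0 := fun x hx => by
      rw [uIcc_of_le (by linarith)] at hx
      have : x ^ 2 < 1 := by nlinarith [hx.1, hx.2]
      have : 0 < 1 - x ^ 2 := by linarith
      positivity
    exact (continuousOn_pow 2).mul ((continuousOn_const.div (by fun_prop) hne).mul (by fun_prop))
  convert (intervalIntegrable_inv_sqrt_sq_sub_sq hr).continuousOn_mul hcont using 1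
  ext x
  simp only [limitDensity, div_eq_mul_inv, mul_inv]
  ring

theorem integral_sq_mul_limitDensity (hr : 0 < r) (hs : 0 < s) (hrs : r ^ 2 + s ^ 2 = 1) :
    ∫ x in (-r)..r, x ^ 2 * limitDensity r s K x = 1 - s := by
  have hr1 : r < 1 := by nlinarith
  rw [integral_eq_sub_of_hasDerivAt_of_le (by linarith)
    (continuousOn_secondMomentPrimitive K hr hr1)
    (fun x hx => hasDerivAt_secondMomentPrimitive K hr hs.ne' hrs (sq_lt_sq' hx.1 hx.2))
    (intervalIntegrable_sq_mul_limitDensity K hr hr1)]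
  exact secondMomentPrimitive_sub K hr hs hrs

end

lemma norm_sq_add_norm_sq_of_mem_unitaryGroup {a b c d : ℂ}
    (hU : !![a, b; c, d] ∈ unitaryGroup (Fin 2) ℂ) : ‖a‖ ^ 2 + ‖b‖ ^ 2 = 1 := by
  have h := congrArg (fun M => (M 0 0).re) (mem_unitaryGroup_iff.mp hU)
  simpa [mul_apply, Fin.sum_univ_two, Complex.mul_conj, Complex.normSq_eq_norm_sq,
    ← Complex.ofReal_pow] using h

theorem density_second_moment_general (a b c d : ℂ)
    (hU : !![a, b; c, d] ∈ Matrix.unitaryGroup (Fin 2) ℂ)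
    (habcd : a * b * c * d ≠ 0)
    (α β : ℂ) :
    ∫ x in (-(‖a‖))..(‖a‖),
        x ^ 2 * (Real.sqrt (1 - ‖a‖ ^ 2) /
            (Real.pi * (1 - x ^ 2) * Real.sqrt (‖a‖ ^ 2 - x ^ 2)) *
          (1 - (‖α‖ ^ 2 - ‖β‖ ^ 2 +
            (a * α * (starRingEnd ℂ) (b * β) +
              (starRingEnd ℂ) (a * α) * (b * β)).re / ‖a‖ ^ 2) * x)) =
      1 - Real.sqrt (1 - ‖a‖ ^ 2) := by
  have hab : a * b ≠ 0 := left_ne_zero_of_mul (left_ne_zero_of_mul habcd)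
  have ha := left_ne_zero_of_mul hab
  have hb := right_ne_zero_of_mul hab
  have hnorm := norm_sq_add_norm_sq_of_mem_unitaryGroup hU
  have hs : √(1 - ‖a‖ ^ 2) = ‖b‖ := by rw [← hnorm, add_sub_cancel_left, sqrt_sq (norm_nonneg b)]
  exact integral_sq_mul_limitDensity _ (norm_pos_iff.2 ha) (hs ▸ norm_pos_iff.2 hb)
    (by rw [hs, hnorm])

/-- The second moment of the limit density: `∫ x² f(x;φ) dx = 1 - √(1-|a|²)`;
in particular it does not depend on `φ`. -/
theorem density_second_moment (a b c d : ℂ)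
    (hU : !![a, b; c, d] ∈ Matrix.unitaryGroup (Fin 2) ℂ)
    (habcd : a * b * c * d ≠ 0)
    (α β : ℂ) (hφ : ‖α‖ ^ 2 + ‖β‖ ^ 2 = 1) :
    ∫ x in (-(‖a‖))..(‖a‖),
        x ^ 2 * (Real.sqrt (1 - ‖a‖ ^ 2) /
            (Real.pi * (1 - x ^ 2) * Real.sqrt (‖a‖ ^ 2 - x ^ 2)) *
          (1 - (‖α‖ ^ 2 - ‖β‖ ^ 2 +
            (a * α * (starRingEnd ℂ) (b * β) +
              (starRingEnd ℂ) (a * α) * (b * β)).re / ‖a‖ ^ 2) * x)) =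
      1 - Real.sqrt (1 - ‖a‖ ^ 2) :=
  density_second_moment_general a b c d hU habcd α β
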